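/- Let x ∈ X^n, y ∈ Y^n with joint type UV. Suppose (A, p_A) has the (α_A, β_A)-hash property with common image Im A, and p_C is uniform on Im A, independent of A. Then E_{A,C}[χ(A x = c)·χ(g_A(c, y) ≠ x)] ≤ (1/|Im A|)·[max{α_A, 1}·2^{−n[|R_A − H(U|V)|^+ − λ_{XY}(n)]} + β_A], where g_A(c, y) = argmin_{x' : A x' = c} H(x'|y), R_A = (log|Im A|)/n, and λ_{XY}(n) = |X||Y| log(n+1)/n. -/
import Mathlib


open Finset Real

/-- The empirical distribution (type) of a sequence `y : Fin n → Y`. -/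
noncomputable def empDist {Y : Type*} [Fintype Y] [DecidableEq Y] (n : ℕ)
    (y : Fin n → Y) : Y → ℝ :=
  fun b => ((Finset.univ.filter (fun i => y i = b)).card : ℝ) / n

/-- The conditional empirical type `ν_{x|y}(a|b)` (convention `0/0 = 0`). -/
noncomputable def condEmpDist {X Y : Type*} [DecidableEq X] [DecidableEq Y] (n : ℕ)
    (x : Fin n → X) (y : Fin n → Y) : X → Y → ℝ :=
  fun a b => ((Finset.univ.filter (fun i => x i = a ∧ y i = b)).card : ℝ) /
    ((Finset.univ.filter (fun i => y i = b)).card : ℝ)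

/-- Empirical conditional entropy (base 2) `H(x|y) = H(ν_{x|y} | ν_y)`. -/
noncomputable def empCondEnt {X Y : Type*} [Fintype X] [DecidableEq X]
    [Fintype Y] [DecidableEq Y] (n : ℕ) (x : Fin n → X) (y : Fin n → Y) : ℝ :=
  ∑ b, empDist n y b *
    ∑ a, -(condEmpDist n x y a b * Real.logb 2 (condEmpDist n x y a b))

section Helpers
variable {X Y : Type*} [Fintype X] [DecidableEq X] [Fintype Y] [DecidableEq Y] {n : ℕ}

/-- joint count -/
def cnt (x' : Fin n → X) (y : Fin n → Y) (a : X) (b : Y) : ℕ :=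
  (Finset.univ.filter fun i => x' i = a ∧ y i = b).card

def cnty (y : Fin n → Y) (b : Y) : ℕ := (Finset.univ.filter fun i => y i = b).card

lemma sum_cnt (x' : Fin n → X) (y : Fin n → Y) (b : Y) :
    ∑ a, cnt x' y a b = cnty y b := by
  classical
  simp only [cnt, cnty, Finset.card_filter]
  rw [Finset.sum_comm]
  refine Finset.sum_congr rfl fun i _ => ?_
  by_cases h : y i = b <;> simp [h]

lemma cnty_pos (y : Fin n → Y) (i : Fin n) : 0 < cnty y (y i) :=
  Finset.card_pos.2 ⟨i, by simp [cnty]⟩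

lemma cnt_pos (x' : Fin n → X) (y : Fin n → Y) (i : Fin n) :
    0 < cnt x' y (x' i) (y i) :=
  Finset.card_pos.2 ⟨i, by simp [cnt]⟩

lemma condEmpDist_eq (x' : Fin n → X) (y : Fin n → Y) (a : X) (b : Y) :
    condEmpDist n x' y a b = (cnt x' y a b : ℝ) / (cnty y b : ℝ) := rfl

lemma condEmpDist_nonneg (x' : Fin n → X) (y : Fin n → Y) (a : X) (b : Y) :
    0 ≤ condEmpDist n x' y a b := by
  rw [condEmpDist_eq]; positivity

lemma condEmpDist_pos (x' : Fin n → X) (y : Fin n → Y) (i : Fin n) :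
    0 < condEmpDist n x' y (x' i) (y i) := by
  rw [condEmpDist_eq]
  exact div_pos (by exact_mod_cast cnt_pos x' y i) (by exact_mod_cast cnty_pos y i)

set_option linter.unusedSectionVars false

/-- grouping a sum over coordinates by joint symbol values -/
lemma sum_fiber (x' : Fin n → X) (y : Fin n → Y) (f : X → Y → ℝ) :
    ∑ i, f (x' i) (y i) = ∑ a, ∑ b, (cnt x' y a b : ℝ) * f a b := by
  classical
  have key : ∀ a b, ((cnt x' y a b : ℕ) : ℝ) * f a b
      = ∑ i, (if x' i = a ∧ y i = b then f a b else 0) := by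
    intro a b
    rw [cnt, Finset.card_filter]
    push_cast
    rw [Finset.sum_mul]
    exact Finset.sum_congr rfl fun i _ => by by_cases h : x' i = a ∧ y i = b <;> simp [h]
  calc ∑ i, f (x' i) (y i)
      = ∑ i, ∑ a, ∑ b, (if x' i = a ∧ y i = b then f a b else 0) := by
        refine Finset.sum_congr rfl fun i _ => ?_
        simp [ite_and, Finset.sum_ite_eq]
    _ = ∑ a, ∑ b, ∑ i, (if x' i = a ∧ y i = b then f a b else 0) := by
        rw [Finset.sum_comm]
        exact Finset.sum_congr rfl fun a _ => Finset.sum_comm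
    _ = ∑ a, ∑ b, (cnt x' y a b : ℝ) * f a b :=
        Finset.sum_congr rfl fun a _ => Finset.sum_congr rfl fun b _ => (key a b).symm


/-- The key identity: sum of log-likelihoods equals -n * empirical conditional entropy. -/
lemma sum_logb (hn : 0 < n) (x' : Fin n → X) (y : Fin n → Y) :
    ∑ i, Real.logb 2 (condEmpDist n x' y (x' i) (y i))
      = -(n : ℝ) * empCondEnt n x' y := by
  classical
  rw [sum_fiber x' y (fun a b => Real.logb 2 (condEmpDist n x' y a b))]
  have swap : ∑ a, ∑ b, (cnt x' y a b : ℝ) * Real.logb 2 (condEmpDist n x' y a b)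
      = ∑ b, ∑ a, (cnt x' y a b : ℝ) * Real.logb 2 (condEmpDist n x' y a b) :=
    Finset.sum_comm
  rw [swap, empCondEnt, Finset.mul_sum]
  refine Finset.sum_congr rfl fun b _ => ?_
  rw [Finset.mul_sum, Finset.mul_sum]
  refine Finset.sum_congr rfl fun a _ => ?_
  have hterm : -(n : ℝ) * (empDist n y b *
      -(condEmpDist n x' y a b * Real.logb 2 (condEmpDist n x' y a b)))
      = ((n : ℝ) * empDist n y b * condEmpDist n x' y a b)
        * Real.logb 2 (condEmpDist n x' y a b) := by ring
  rw [hterm]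
  congr 1
  by_cases h : cnty y b = 0
  · have h2 : cnt x' y a b = 0 := by
      have := sum_cnt x' y b
      rw [h] at this
      have hle : cnt x' y a b ≤ ∑ a, cnt x' y a b :=
        Finset.single_le_sum (f := fun a => cnt x' y a b) (fun _ _ => Nat.zero_le _) (Finset.mem_univ a)
      omega
    have hE : empDist n y b = 0 := by
      rw [empDist]
      have : (Finset.univ.filter (fun i => y i = b)).card = 0 := h
      rw [this]; simp
    rw [h2, hE]; ring
  · rw [empDist, condEmpDist_eq]
    have hb : ((cnty y b : ℝ)) ≠ 0 := Nat.cast_ne_zero.2 h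
    have hn' : (n : ℝ) ≠ 0 := Nat.cast_ne_zero.2 hn.ne'
    have hc : ((Finset.univ.filter (fun i => y i = b)).card : ℝ) = (cnty y b : ℝ) := rfl
    rw [hc]
    field_simp

lemma prod_condEmpDist (hn : 0 < n) (x' : Fin n → X) (y : Fin n → Y) :
    ∏ i, condEmpDist n x' y (x' i) (y i)
      = (2 : ℝ) ^ (-(n : ℝ) * empCondEnt n x' y) := by
  rw [← sum_logb hn x' y, Real.rpow_sum_of_pos two_pos]
  exact Finset.prod_congr rfl fun i _ =>
    (Real.rpow_logb two_pos (by norm_num) (condEmpDist_pos x' y i)).symm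


/-- summing the product measure over all sequences gives 1. -/
lemma sum_prod_eq_one (x0 : Fin n → X) (y : Fin n → Y) :
    ∑ x' : Fin n → X, ∏ i, condEmpDist n x0 y (x' i) (y i) = 1 := by
  classical
  have key : ∀ i : Fin n, ∑ a, condEmpDist n x0 y a (y i) = 1 := by
    intro i
    have hb : ((cnty y (y i) : ℝ)) ≠ 0 := Nat.cast_ne_zero.2 (cnty_pos y i).ne'
    have : ∑ a, condEmpDist n x0 y a (y i)
        = (∑ a, (cnt x0 y a (y i) : ℝ)) / (cnty y (y i) : ℝ) := by
      rw [Finset.sum_div]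
      exact Finset.sum_congr rfl fun a _ => condEmpDist_eq x0 y a (y i)
    rw [this]
    rw [show (∑ a, (cnt x0 y a (y i) : ℝ)) = ((∑ a, cnt x0 y a (y i) : ℕ) : ℝ) by push_cast; rfl]
    rw [sum_cnt x0 y (y i)]
    exact div_self hb
  calc ∑ x' : Fin n → X, ∏ i, condEmpDist n x0 y (x' i) (y i)
      = ∏ i, ∑ a, condEmpDist n x0 y a (y i) := by
        rw [Fintype.prod_sum (fun i a => condEmpDist n x0 y a (y i))]
    _ = 1 := by simp [key]


lemma cnt_le (x' : Fin n → X) (y : Fin n → Y) (a : X) (b : Y) :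
    cnt x' y a b < n + 1 :=
  Nat.lt_succ_of_le (le_trans (Finset.card_filter_le _ _) (by simp))

/-- the joint type as a bounded function -/
def keyF (x' : Fin n → X) (y : Fin n → Y) : X × Y → Fin (n + 1) :=
  fun p => ⟨cnt x' y p.1 p.2, cnt_le x' y p.1 p.2⟩

lemma condEmpDist_congr {x' x0 : Fin n → X} {y : Fin n → Y}
    (h : keyF x' y = keyF x0 y) : condEmpDist n x' y = condEmpDist n x0 y := by
  funext a b
  have : cnt x' y a b = cnt x0 y a b := congrArg (fun z : Fin (n+1) => z.val) (congrFun h (a, b))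
  rw [condEmpDist_eq, condEmpDist_eq, show ((cnt x' y a b : ℕ) : ℝ) = (cnt x0 y a b : ℝ) from Nat.cast_inj.mpr this]

lemma empCondEnt_congr {x' x0 : Fin n → X} {y : Fin n → Y}
    (h : keyF x' y = keyF x0 y) : empCondEnt n x' y = empCondEnt n x0 y := by
  rw [empCondEnt, empCondEnt, condEmpDist_congr h]

/-- each type class has at most 2^(n H) elements. -/
lemma fiber_card_le (hn : 0 < n) (x0 : Fin n → X) (y : Fin n → Y) :
    (((Finset.univ.filter fun x' : Fin n → X => keyF x' y = keyF x0 y).card : ℝ))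
      ≤ (2 : ℝ) ^ ((n : ℝ) * empCondEnt n x0 y) := by
  classical
  set S := Finset.univ.filter fun x' : Fin n → X => keyF x' y = keyF x0 y with hS
  have hprod : ∀ x' ∈ S, ∏ i, condEmpDist n x0 y (x' i) (y i)
      = (2 : ℝ) ^ (-(n : ℝ) * empCondEnt n x0 y) := by
    intro x' hx'
    have hk : keyF x' y = keyF x0 y := (Finset.mem_filter.1 hx').2
    rw [← condEmpDist_congr hk, ← empCondEnt_congr hk]
    exact prod_condEmpDist hn x' y
  have hsum : (S.card : ℝ) * (2 : ℝ) ^ (-(n : ℝ) * empCondEnt n x0 y) ≤ 1 := by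
    calc (S.card : ℝ) * (2 : ℝ) ^ (-(n : ℝ) * empCondEnt n x0 y)
        = ∑ x' ∈ S, ∏ i, condEmpDist n x0 y (x' i) (y i) := by
          rw [Finset.sum_congr rfl hprod, Finset.sum_const, nsmul_eq_mul]
      _ ≤ ∑ x' : Fin n → X, ∏ i, condEmpDist n x0 y (x' i) (y i) := by
          refine Finset.sum_le_sum_of_subset_of_nonneg (Finset.subset_univ S)
            fun x' _ _ => Finset.prod_nonneg fun i _ => condEmpDist_nonneg x0 y (x' i) (y i)
      _ = 1 := sum_prod_eq_one x0 y
  have h2 : (0 : ℝ) < (2 : ℝ) ^ (-(n : ℝ) * empCondEnt n x0 y) := Real.rpow_pos_of_pos two_pos _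
  have hfin : (S.card : ℝ) ≤ 1 / (2 : ℝ) ^ (-(n : ℝ) * empCondEnt n x0 y) :=
    (le_div_iff₀ h2).2 hsum
  rw [one_div, ← Real.rpow_neg (by norm_num : (0:ℝ) ≤ 2)] at hfin
  rwa [neg_mul, neg_neg] at hfin

/-- The counting bound: the number of sequences with conditional entropy at most
`H(x|y)` is at most `(n+1)^(|X||Y|) 2^(n H(x|y))`. -/
lemma type_count (hn : 0 < n) (x : Fin n → X) (y : Fin n → Y) :
    (((Finset.univ.filter fun x' : Fin n → X =>
        empCondEnt n x' y ≤ empCondEnt n x y).card : ℝ))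
      ≤ ((n : ℝ) + 1) ^ (Fintype.card X * Fintype.card Y)
          * (2 : ℝ) ^ ((n : ℝ) * empCondEnt n x y) := by
  classical
  set T := Finset.univ.filter fun x' : Fin n → X =>
      empCondEnt n x' y ≤ empCondEnt n x y with hT
  have hcard : T.card = ∑ m : X × Y → Fin (n + 1),
      (T.filter fun x' => keyF x' y = m).card :=
    Finset.card_eq_sum_card_fiberwise (fun x' _ => Finset.mem_univ _)
  have hfib : ∀ m : X × Y → Fin (n + 1),
      (((T.filter fun x' => keyF x' y = m).card : ℝ))
        ≤ (2 : ℝ) ^ ((n : ℝ) * empCondEnt n x y) := by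
    intro m
    rcases Finset.eq_empty_or_nonempty (T.filter fun x' => keyF x' y = m) with he | ⟨x0, hx0⟩
    · rw [he]; simp; positivity
    · have hx0T : x0 ∈ T := (Finset.mem_filter.1 hx0).1
      have hx0m : keyF x0 y = m := (Finset.mem_filter.1 hx0).2
      have hsub : (T.filter fun x' => keyF x' y = m)
          ⊆ Finset.univ.filter fun x' : Fin n → X => keyF x' y = keyF x0 y := by
        intro x' hx'
        rw [Finset.mem_filter]
        exact ⟨Finset.mem_univ _, (Finset.mem_filter.1 hx').2.trans hx0m.symm⟩
      have h1 : (((T.filter fun x' => keyF x' y = m).card : ℝ))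
          ≤ (2 : ℝ) ^ ((n : ℝ) * empCondEnt n x0 y) :=
        le_trans (by exact_mod_cast Finset.card_le_card hsub) (fiber_card_le hn x0 y)
      refine h1.trans (Real.rpow_le_rpow_of_exponent_le (by norm_num) ?_)
      have hH : empCondEnt n x0 y ≤ empCondEnt n x y := by
        have := (Finset.mem_filter.1 hx0T).2
        exact this
      exact mul_le_mul_of_nonneg_left hH (Nat.cast_nonneg n)
  calc (T.card : ℝ) = ∑ m : X × Y → Fin (n + 1),
        (((T.filter fun x' => keyF x' y = m).card : ℝ)) := by
        rw [hcard]; push_cast; rfl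
    _ ≤ ∑ _m : X × Y → Fin (n + 1), (2 : ℝ) ^ ((n : ℝ) * empCondEnt n x y) :=
        Finset.sum_le_sum fun m _ => hfib m
    _ = ((n : ℝ) + 1) ^ (Fintype.card X * Fintype.card Y)
          * (2 : ℝ) ^ ((n : ℝ) * empCondEnt n x y) := by
        rw [Finset.sum_const, nsmul_eq_mul]
        congr 1
        rw [Finset.card_univ, Fintype.card_fun, Fintype.card_prod, Fintype.card_fin]
        push_cast
        ring

end Helpers

open scoped Classical in
/-- For fixed `(x, y)` of joint type `UV`, an ensemble `(𝒜, p_A)` with the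
`(α_A, β_A)`-hash property, `c` uniform on `Im 𝒜`, and minimum conditional
entropy decoding `g_A(c, y)`,
`E_{A,C}[χ(Ax = c)χ(g_A(c,y) ≠ x)] ≤ (1/|Im 𝒜|)[max{α_A,1}·2^{−n[|R_A − H(U|V)|⁺ − λ_{XY}]} + β_A]`. -/
theorem hash_channel_decoding_bound
    {X Y CA : Type*} [Fintype X] [DecidableEq X] [Fintype Y] [DecidableEq Y]
    [Fintype CA] {n : ℕ} (hn : 0 < n)
    (x : Fin n → X) (y : Fin n → Y)
    (p : ((Fin n → X) → CA) → ℝ) (hp0 : ∀ A, 0 ≤ p A) (hp1 : ∑ A, p A = 1)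
    (ImA : Finset CA) (hIm : ∀ A, p A ≠ 0 → Finset.univ.image A = ImA)
    (αA βA : ℝ) (hα : 0 ≤ αA) (hβ : 0 ≤ βA)
    (hhash : ∀ T T' : Finset (Fin n → X),
      ∑ u ∈ T, ∑ u' ∈ T', (∑ A, if A u = A u' then p A else 0)
        ≤ ((T ∩ T').card : ℝ)
          + (T.card : ℝ) * (T'.card : ℝ) * αA / (ImA.card : ℝ)
          + (min T.card T'.card : ℕ) * βA)
    (g : ((Fin n → X) → CA) → CA → (Fin n → Y) → (Fin n → X))
    (hg : ∀ A c (x' : Fin n → X), A x' = c →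
      A (g A c y) = c ∧ empCondEnt n (g A c y) y ≤ empCondEnt n x' y) :
    ∑ A, p A * ∑ c ∈ ImA, (1 / (ImA.card : ℝ)) *
        (if A x = c ∧ g A c y ≠ x then (1 : ℝ) else 0)
      ≤ (1 / (ImA.card : ℝ)) *
          (max αA 1 *
            (2 : ℝ) ^ (-(n : ℝ) *
              (max (Real.logb 2 (ImA.card) / n - empCondEnt n x y) 0
                - (Fintype.card X : ℝ) * (Fintype.card Y : ℝ)
                    * Real.logb 2 (n + 1) / n))
          + βA) := by
    classical
  rcases Finset.eq_empty_or_nonempty ImA with hem | hne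
  · subst hem
    simp
  -- notation
  set m : ℝ := (ImA.card : ℝ) with hm
  have hm1 : (1 : ℝ) ≤ m := by
    rw [hm]; exact_mod_cast Nat.one_le_iff_ne_zero.2 (Finset.card_ne_zero_of_mem hne.choose_spec)
  have hm0 : (0 : ℝ) < m := lt_of_lt_of_le one_pos hm1
  set H : ℝ := empCondEnt n x y with hH
  set E : ℝ := -(n : ℝ) *
      (max (Real.logb 2 (ImA.card) / n - empCondEnt n x y) 0
        - (Fintype.card X : ℝ) * (Fintype.card Y : ℝ) * Real.logb 2 (n + 1) / n) with hE
  have hn' : (n : ℝ) ≠ 0 := Nat.cast_ne_zero.2 hn.ne'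
  have hmax1 : (1 : ℝ) ≤ max αA 1 := le_max_right _ _
  -- step 1: per-A bound on the inner sum
  have hinner : ∀ A : (Fin n → X) → CA,
      ∑ c ∈ ImA, (1 / m) * (if A x = c ∧ g A c y ≠ x then (1 : ℝ) else 0)
        ≤ (1 / m) * (if g A (A x) y ≠ x then (1 : ℝ) else 0) := by
    intro A
    rw [← Finset.mul_sum]
    refine mul_le_mul_of_nonneg_left ?_ (by positivity)
    have hrw : ∀ c ∈ ImA, (if A x = c ∧ g A c y ≠ x then (1 : ℝ) else 0)
        = (if A x = c then (if g A c y ≠ x then (1 : ℝ) else 0) else 0) := by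
      intro c _
      by_cases h1 : A x = c <;> by_cases h2 : g A c y ≠ x <;> simp [h1, h2]
    rw [Finset.sum_congr rfl hrw, Finset.sum_ite_eq ImA (A x)]
    split_ifs <;> norm_num
  -- trivial bound on the χ term
  have hchi_le_one : ∀ A : (Fin n → X) → CA,
      (if g A (A x) y ≠ x then (1 : ℝ) else 0) ≤ 1 := by
    intro A; split_ifs <;> norm_num
  by_cases hc : Real.logb 2 (ImA.card) / n - empCondEnt n x y ≤ 0
  · -- low rate case: trivial bound suffices
    have hmax : max (Real.logb 2 (ImA.card) / n - empCondEnt n x y) 0 = 0 := max_eq_right hc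
    have hE0 : 0 ≤ E := by
      rw [hE, hmax]
      have hl : 0 ≤ Real.logb 2 ((n : ℝ) + 1) := by
        apply Real.logb_nonneg (by norm_num)
        exact_mod_cast Nat.le_add_left 1 n
      have : 0 ≤ (Fintype.card X : ℝ) * (Fintype.card Y : ℝ) * Real.logb 2 (n + 1) / n := by
        positivity
      nlinarith
    have h2E : (1 : ℝ) ≤ (2 : ℝ) ^ E := by
      calc (1 : ℝ) = (2 : ℝ) ^ (0 : ℝ) := (Real.rpow_zero 2).symm
        _ ≤ (2 : ℝ) ^ E := Real.rpow_le_rpow_of_exponent_le (by norm_num) hE0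
    calc ∑ A, p A * ∑ c ∈ ImA, (1 / m) * (if A x = c ∧ g A c y ≠ x then (1 : ℝ) else 0)
        ≤ ∑ A, p A * (1 / m) := by
          refine Finset.sum_le_sum fun A _ => ?_
          refine mul_le_mul_of_nonneg_left ?_ (hp0 A)
          refine (hinner A).trans ?_
          calc (1 / m) * (if g A (A x) y ≠ x then (1 : ℝ) else 0)
              ≤ (1 / m) * 1 := mul_le_mul_of_nonneg_left (hchi_le_one A) (by positivity)
            _ = 1 / m := mul_one _
      _ = 1 / m := by rw [← Finset.sum_mul, hp1, one_mul]
      _ = (1 / m) * 1 := (mul_one _).symm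
      _ ≤ (1 / m) * (max αA 1 * (2 : ℝ) ^ E + βA) := by
          refine mul_le_mul_of_nonneg_left ?_ (by positivity)
          nlinarith
  · -- high rate case
    push_neg at hc
    have hmax : max (Real.logb 2 (ImA.card) / n - empCondEnt n x y) 0
        = Real.logb 2 (ImA.card) / n - empCondEnt n x y := max_eq_left hc.le
    -- the candidate set
    set T : Finset (Fin n → X) :=
      Finset.univ.filter fun x' => empCondEnt n x' y ≤ empCondEnt n x y with hT
    set T' : Finset (Fin n → X) := T.erase x with hT'
    -- step 2: χ bound by the collision count
    have hchi : ∀ A : (Fin n → X) → CA,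
        (if g A (A x) y ≠ x then (1 : ℝ) else 0)
          ≤ ∑ x' ∈ T', (if A x = A x' then (1 : ℝ) else 0) := by
      intro A
      by_cases hgx : g A (A x) y = x
      · simp only [hgx, ne_eq, not_true_eq_false, if_false]
        exact Finset.sum_nonneg fun x' _ => by split_ifs <;> norm_num
      · have hgg := hg A (A x) x rfl
        have hmem : g A (A x) y ∈ T' := by
          rw [hT', Finset.mem_erase]
          exact ⟨hgx, by rw [hT, Finset.mem_filter]; exact ⟨Finset.mem_univ _, hgg.2⟩⟩
        have hterm : (if A x = A (g A (A x) y) then (1 : ℝ) else 0) = 1 := by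
          rw [if_pos hgg.1.symm]
        calc (if g A (A x) y ≠ x then (1 : ℝ) else 0) = 1 := if_pos hgx
          _ = (if A x = A (g A (A x) y) then (1 : ℝ) else 0) := hterm.symm
          _ ≤ ∑ x' ∈ T', (if A x = A x' then (1 : ℝ) else 0) :=
            Finset.single_le_sum (f := fun x' => if A x = A x' then (1 : ℝ) else 0)
              (fun x' _ => by by_cases h : A x = A x' <;> simp [h]) hmem
    -- step 3: expected collision count via the hash property
    have hswap : ∑ A, p A * ∑ x' ∈ T', (if A x = A x' then (1 : ℝ) else 0)
        = ∑ x' ∈ T', ∑ A, (if A x = A x' then p A else 0) := by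
      simp only [Finset.mul_sum]
      rw [Finset.sum_comm]
      exact Finset.sum_congr rfl fun x' _ => Finset.sum_congr rfl fun A _ => by
        by_cases h : A x = A x' <;> simp [h]
    have hcoll : ∑ A, p A * ∑ x' ∈ T', (if A x = A x' then (1 : ℝ) else 0)
        ≤ (T.card : ℝ) * αA / m + βA := by
      rw [hswap]
      have hh := hhash {x} T'
      rw [Finset.sum_singleton] at hh
      have hint : (({x} : Finset (Fin n → X)) ∩ T').card = 0 := by
        rw [Finset.singleton_inter_of_notMem (Finset.notMem_erase x T), Finset.card_empty]
      rw [hint, Finset.card_singleton] at hh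
      refine hh.trans ?_
      have hT'T : ((T'.card : ℕ) : ℝ) ≤ (T.card : ℝ) := by
        exact_mod_cast Finset.card_le_card (Finset.erase_subset x T)
      have e1 : (1 : ℝ) * (T'.card : ℝ) * αA / m ≤ (T.card : ℝ) * αA / m := by
        rw [one_mul]
        exact (div_le_div_iff_of_pos_right hm0).2 (mul_le_mul_of_nonneg_right hT'T hα)
      have e2 : ((min (1 : ℕ) T'.card : ℕ) : ℝ) * βA ≤ βA := by
        have : ((min (1 : ℕ) T'.card : ℕ) : ℝ) ≤ 1 := by
          exact_mod_cast min_le_left 1 T'.card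
        nlinarith
      push_cast at e1 e2 ⊢
      linarith
    -- the count of the candidate set
    have hTcount : (T.card : ℝ)
        ≤ ((n : ℝ) + 1) ^ (Fintype.card X * Fintype.card Y)
            * (2 : ℝ) ^ ((n : ℝ) * H) := type_count hn x y
    -- rewrite the exponential
    have hnpos : (0 : ℝ) < (n : ℝ) + 1 := by positivity
    have h2E : (2 : ℝ) ^ E
        = ((n : ℝ) + 1) ^ (Fintype.card X * Fintype.card Y)
            * (2 : ℝ) ^ ((n : ℝ) * H) / m := by
      have hEeq : E = Real.logb 2 ((n : ℝ) + 1)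
            * ((Fintype.card X * Fintype.card Y : ℕ) : ℝ)
          + ((n : ℝ) * H + -(Real.logb 2 m)) := by
        rw [hE, hmax]
        push_cast
        field_simp
        ring
      rw [hEeq, Real.rpow_add two_pos, Real.rpow_add two_pos,
        Real.rpow_neg (by norm_num : (0:ℝ) ≤ 2),
        Real.rpow_logb two_pos (by norm_num) hm0,
        Real.rpow_mul (by norm_num : (0:ℝ) ≤ 2),
        Real.rpow_logb two_pos (by norm_num) hnpos,
        Real.rpow_natCast]
      rw [div_eq_mul_inv]
      ring
    -- the key numeric inequality
    have hkey : (T.card : ℝ) * αA / m ≤ max αA 1 * (2 : ℝ) ^ E := by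
      rw [h2E]
      have hnum : (T.card : ℝ) * αA
          ≤ max αA 1 * (((n : ℝ) + 1) ^ (Fintype.card X * Fintype.card Y)
              * (2 : ℝ) ^ ((n : ℝ) * H)) := by
        calc (T.card : ℝ) * αA
            ≤ (((n : ℝ) + 1) ^ (Fintype.card X * Fintype.card Y)
                * (2 : ℝ) ^ ((n : ℝ) * H)) * max αA 1 :=
              mul_le_mul hTcount (le_max_left _ _) hα (by positivity)
          _ = _ := mul_comm _ _
      calc (T.card : ℝ) * αA / m
          ≤ (max αA 1 * (((n : ℝ) + 1) ^ (Fintype.card X * Fintype.card Y)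
              * (2 : ℝ) ^ ((n : ℝ) * H))) / m := by
            exact (div_le_div_iff_of_pos_right hm0).2 hnum
        _ = max αA 1 * (((n : ℝ) + 1) ^ (Fintype.card X * Fintype.card Y)
              * (2 : ℝ) ^ ((n : ℝ) * H) / m) := by ring
    -- final chain
    calc ∑ A, p A * ∑ c ∈ ImA, (1 / m) * (if A x = c ∧ g A c y ≠ x then (1 : ℝ) else 0)
        ≤ ∑ A, p A * ((1 / m) * ∑ x' ∈ T', (if A x = A x' then (1 : ℝ) else 0)) := by
          refine Finset.sum_le_sum fun A _ => mul_le_mul_of_nonneg_left ?_ (hp0 A)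
          exact (hinner A).trans (mul_le_mul_of_nonneg_left (hchi A) (by positivity))
      _ = (1 / m) * ∑ A, p A * ∑ x' ∈ T', (if A x = A x' then (1 : ℝ) else 0) := by
          rw [Finset.mul_sum]
          exact Finset.sum_congr rfl fun A _ => by ring
      _ ≤ (1 / m) * ((T.card : ℝ) * αA / m + βA) :=
          mul_le_mul_of_nonneg_left hcoll (by positivity)
      _ ≤ (1 / m) * (max αA 1 * (2 : ℝ) ^ E + βA) :=
          mul_le_mul_of_nonneg_left (by linarith) (by positivity)
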